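/- (Voronoi congruence, multiplicative form) Let p ≥ 5 be a prime, g a primitive root modulo p, and k an even integer with 2 ≤ k < p-1 such that g^k ≢ 1 (mod p). Define h(x) = ((x mod p) - g·((x·g^{-1}) mod p))/p + (g-1)/2 for x coprime to p, where (y mod p) denotes the least nonnegative residue. Then B_k ≡ (2k/(1 - g^k)) · ∑_{i=0}^{(p-3)/2} g^{(k-1)i} h(g^i) (mod p). -/

import Mathlib

/-!
Write `∑_{a<p} a^k = p m`. In Faulhaber's formula for this sum the lower terms are `p`-integral
by von Staudt–Clausen and carry a factor `p²`, so `B_k ≡ m (mod p)`. Since `a ↦ g a mod p`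
permutes the residues, expanding `(g a - p ⌊g a / p⌋)^k` to first order modulo `p²` gives
Voronoi's congruence `(1 - g^k) m + k g^(k-1) ∑_a a^(k-1) ⌊g a / p⌋ ≡ 0 (mod p)`.
The carries `⌊g a / p⌋` of `a` and `p - a` add up to `g - 1`, and `h(g^i) = (g - 1)/2 - ⌊g b / p⌋`
for `b = g^i g⁻¹ mod p`. So pairing `a` with `p - a` and letting `a` run over the half system
`g^i g⁻¹`, `i < (p-1)/2`, turns the carry sum into `-2 g^(1-k) ∑_i g^((k-1)i) h(g^i)`.
-/

open Finset

namespace IsPrimitiveRoot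

variable {K M : Type*} [AddCommMonoid M]

lemma sum_range_pow_mul_eq_sum_erase_zero [Field K] [Fintype K] [DecidableEq K] {ζ : K}
    (hζ : IsPrimitiveRoot ζ (Fintype.card K - 1)) {c : K} (hc : c ≠ 0) (f : K → M) :
    ∑ i ∈ range (Fintype.card K - 1), f (ζ ^ i * c) = ∑ x ∈ univ.erase 0, f x := by
  have : NeZero (Fintype.card K - 1) := ⟨by have := Fintype.one_lt_card (α := K); omega⟩
  refine sum_nbij (fun i => ζ ^ i * c) (fun i _ => by simp [hc, hζ.ne_zero this.out])
    (fun i hi j hj hij => hζ.pow_inj (mem_range.mp hi) (mem_range.mp hj) (mul_right_cancel₀ hc hij))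
    (fun x hx => ?_) (fun _ _ => rfl)
  obtain ⟨i, hi, hix⟩ := hζ.eq_pow_of_pow_eq_one
    (FiniteField.pow_card_sub_one_eq_one (x * c⁻¹) (by simpa [hc] using ne_of_mem_erase hx))
  exact ⟨i, mem_range.mpr hi, by simp [hix, hc]⟩

lemma sum_range_two_mul_pow_mul [CommRing K] [IsDomain K] {ζ : K} {n : ℕ}
    (hζ : IsPrimitiveRoot ζ (2 * n)) (c : K) (f : K → M) :
    ∑ i ∈ range (2 * n), f (ζ ^ i * c) = ∑ i ∈ range n, (f (ζ ^ i * c) + f (-(ζ ^ i * c))) := by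
  rcases eq_or_ne n 0 with rfl | hn
  · simp
  have hneg : ζ ^ n = -1 := by
    have hζn := hζ.pow_of_dvd hn (dvd_mul_left n 2)
    rw [Nat.mul_div_cancel _ (Nat.pos_of_ne_zero hn)] at hζn
    exact hζn.eq_neg_one_of_two_right
  rw [two_mul, sum_range_add, sum_add_distrib]
  simp [pow_add, hneg]

end IsPrimitiveRoot

namespace Voronoi

lemma sum_range_eq_sum_zmod {M : Type*} [AddCommMonoid M] (n : ℕ) [NeZero n] (f : ℕ → M) :
    ∑ a ∈ range n, f a = ∑ x : ZMod n, f x.val :=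
  sum_nbij' (fun a => (a : ZMod n)) ZMod.val (by simp) (by simp [ZMod.val_lt])
    (fun a ha => ZMod.val_cast_of_lt (mem_range.mp ha)) (by simp)
    (fun a ha => by rw [ZMod.val_cast_of_lt (mem_range.mp ha)])

lemma sum_range_mul_mod {M : Type*} [AddCommMonoid M] (n : ℕ) [NeZero n] {g : ℕ}
    (hg : g.Coprime n) (f : ℕ → M) : ∑ a ∈ range n, f (g * a % n) = ∑ a ∈ range n, f a := by
  rw [sum_range_eq_sum_zmod, sum_range_eq_sum_zmod]
  have hval (x : ZMod n) : g * x.val % n = (ZMod.unitOfCoprime g hg * x).val := by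
    simp [ZMod.val_mul, ZMod.val_natCast, Nat.mod_mul_mod]
  simp only [hval]
  exact Equiv.sum_comp (ZMod.unitOfCoprime g hg).mulLeft (fun x : ZMod n => f x.val)

theorem voronoi_congruence (n g k : ℕ) [NeZero n] (hg : g.Coprime n) :
    (n : ℤ) ^ 2 ∣ (1 - (g : ℤ) ^ k) * ∑ a ∈ range n, (a : ℤ) ^ k
      + k * g ^ (k - 1) * n * ∑ a ∈ range n, (a : ℤ) ^ (k - 1) * (g * a / n : ℕ) := by
  have hterm (a : ℕ) : (n : ℤ) ^ 2 ∣ ((g * a % n : ℕ) : ℤ) ^ k - (g * a : ℤ) ^ k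
      + k * (g * a : ℤ) ^ (k - 1) * n * (g * a / n : ℕ) := by
    have hdiv := Nat.mod_add_div (g * a) n
    generalize g * a % n = r, g * a / n = q at hdiv ⊢
    have hr : (r : ℤ) = g * a + -(n * q) := by
      have := congrArg ((↑) : ℕ → ℤ) hdiv
      push_cast at this
      linear_combination this
    have hnq : (n : ℤ) ^ 2 ∣ (-(n * q : ℤ)) ^ 2 := Dvd.intro (q ^ 2 : ℤ) (by ring)
    refine (hnq.trans (sq_dvd_add_pow_sub_sub (-(n * q : ℤ)) (g * a) k)).trans (dvd_of_eq ?_)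
    rw [hr]
    ring
  have hsum := dvd_sum fun a (_ : a ∈ range n) => hterm a
  rw [sum_add_distrib, sum_sub_distrib, sum_range_mul_mod n hg (fun a => ((a : ℕ) : ℤ) ^ k)] at hsum
  refine hsum.trans (dvd_of_eq ?_)
  simp only [mul_sum, sub_mul, one_mul, mul_pow, ← sum_sub_distrib, ← sum_add_distrib]
  exact sum_congr rfl fun a _ => by ring

lemma mul_div_add_mul_sub_div {n g a : ℕ} (ha : a ≤ n) (hga : ¬ n ∣ g * a) :
    g * a / n + g * (n - a) / n + 1 = g := by
  have hn : 0 < n := Nat.pos_of_ne_zero <| by rintro rfl; simp_all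
  have hmod : n ≤ g * a % n + g * (n - a) % n := by
    have hpos : 0 < g * a % n := Nat.pos_of_ne_zero fun h => hga (Nat.dvd_of_mod_eq_zero h)
    refine Nat.le_of_dvd (by omega) (Nat.dvd_of_mod_eq_zero ?_)
    rw [← Nat.add_mod, ← mul_add, Nat.add_sub_cancel' ha, Nat.mul_mod_left]
  have hsplit := Nat.add_div_eq_of_le_mod_add_mod hmod hn
  rwa [← mul_add, Nat.add_sub_cancel' ha, Nat.mul_div_cancel _ hn, eq_comm] at hsplit

lemma natCast_ne_zero_of_lt {p n : ℕ} (hn0 : n ≠ 0) (hnp : n < p) : (n : ZMod p) ≠ 0 := by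
  rw [Ne, ZMod.natCast_eq_zero_iff]
  exact fun h => (Nat.le_of_dvd (Nat.pos_of_ne_zero hn0) h).not_gt hnp

section Bernoulli

variable (p : ℕ) [Fact p.Prime]

def pIntegers : Subring ℚ where
  carrier := {q | (q.den : ZMod p) ≠ 0}
  mul_mem' {q r} hq hr := by
    obtain ⟨d, hd⟩ := Rat.mul_den_dvd q r
    exact fun h => mul_ne_zero hq hr
      (by exact_mod_cast (by simp [hd, h] : ((q.den * r.den : ℕ) : ZMod p) = 0))
  one_mem' := by simp
  add_mem' {q r} hq hr := by
    obtain ⟨d, hd⟩ := Rat.add_den_dvd q r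
    exact fun h => mul_ne_zero hq hr
      (by exact_mod_cast (by simp [hd, h] : ((q.den * r.den : ℕ) : ZMod p) = 0))
  zero_mem' := by simp
  neg_mem' {q} hq := by simpa using hq

variable {p}

lemma mem_pIntegers {q : ℚ} : q ∈ pIntegers p ↔ (q.den : ZMod p) ≠ 0 := Iff.rfl

lemma inv_natCast_mem_pIntegers {n : ℕ} (hn : (n : ZMod p) ≠ 0) : (n : ℚ)⁻¹ ∈ pIntegers p := by
  have : n ≠ 0 := by rintro rfl; simp at hn
  simpa [pIntegers, Rat.inv_natCast_den, this] using hn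

lemma cast_add_prime_mul {a s : ℚ} (ha : a ∈ pIntegers p) (hs : s ∈ pIntegers p) :
    ((a + p * s : ℚ) : ZMod p) = a := by
  have hps : (p * s : ℚ) ∈ pIntegers p := mul_mem (natCast_mem _ p) hs
  rw [Rat.cast_add_of_ne_zero ha hps,
    Rat.cast_mul_of_ne_zero (mem_pIntegers.1 (natCast_mem _ p)) hs]
  simp

lemma bernoulli_mem_pIntegers {i : ℕ} (hi : i < p - 1) : bernoulli i ∈ pIntegers p := by
  have hp : p.Prime := Fact.out
  obtain ⟨j, rfl | rfl⟩ := Nat.even_or_odd' i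
  · obtain ⟨n, hn⟩ := Bernoulli.vonStaudt_clausen j
    rw [eq_sub_of_add_eq hn.symm]
    refine sub_mem (intCast_mem _ n) (sum_mem fun q hq => ?_)
    obtain ⟨hq, hqp, hdvd⟩ : q < 2 * j + 2 ∧ q.Prime ∧ q - 1 ∣ 2 * j := by simpa using hq
    rw [one_div]
    refine inv_natCast_mem_pIntegers fun hq0 => ?_
    obtain rfl := (Nat.prime_dvd_prime_iff_eq hp hqp).mp ((ZMod.natCast_eq_zero_iff _ _).mp hq0)
    have := Nat.eq_zero_of_dvd_of_lt hdvd hi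
    omega
  · rcases Nat.eq_zero_or_pos j with rfl | hj
    · rw [bernoulli_one, neg_div, one_div]
      exact neg_mem (inv_natCast_mem_pIntegers
        (natCast_ne_zero_of_lt two_ne_zero (by omega : 2 < p)))
    · rw [bernoulli_eq_zero_of_odd (odd_two_mul_add_one j) (by omega)]
      exact zero_mem _

lemma cast_bernoulli_eq_of_sum_pow_eq {k : ℕ} (hk : k < p - 1) {m : ℤ}
    (hm : ∑ a ∈ range p, (a : ℚ) ^ k = p * m) : ((bernoulli k : ℚ) : ZMod p) = m := by
  set s : ℚ := ∑ i ∈ range k, bernoulli i * (k + 1).choose i * p ^ (k - 1 - i) / (k + 1)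
  have hs : s ∈ pIntegers p := by
    refine sum_mem fun i hi => ?_
    rw [div_eq_mul_inv, show (k : ℚ) + 1 = (k + 1 : ℕ) by push_cast; rfl]
    refine mul_mem (mul_mem (mul_mem ?_ (natCast_mem _ _)) (pow_mem (natCast_mem _ _) _))
      (inv_natCast_mem_pIntegers (natCast_ne_zero_of_lt k.succ_ne_zero (by omega)))
    exact bernoulli_mem_pIntegers (by simp at hi; omega)
  have hp0 : (p : ℚ) ≠ 0 := by exact_mod_cast (Fact.out : p.Prime).ne_zero
  have hB : bernoulli k = m + p * -s := by
    have hterm : ∀ i ∈ range k, bernoulli i * (k + 1).choose i * (p : ℚ) ^ (k + 1 - i) / (k + 1)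
        = p * (p * (bernoulli i * (k + 1).choose i * p ^ (k - 1 - i) / (k + 1))) := by
      intro i hi
      rw [show k + 1 - i = k - 1 - i + 2 by simp at hi; omega, pow_add]
      ring
    have hlast : bernoulli k * ((k + 1 : ℕ) : ℚ) * (p : ℚ) ^ 1 / (k + 1) = p * bernoulli k := by
      push_cast
      field_simp
    rw [sum_range_pow, sum_range_succ, sum_congr rfl hterm, ← mul_sum, ← mul_sum,
      Nat.choose_succ_self_right, Nat.add_sub_cancel_left, hlast] at hm
    apply mul_left_cancel₀ hp0
    linear_combination hm
  rw [hB, cast_add_prime_mul (intCast_mem _ m) (neg_mem hs), Rat.cast_intCast]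

lemma prime_dvd_sum_range_pow {k : ℕ} (hk : k < p - 1) : (p : ℤ) ∣ ∑ a ∈ range p, (a : ℤ) ^ k := by
  rw [← ZMod.intCast_zmod_eq_zero_iff_dvd]
  push_cast
  rw [sum_range_eq_sum_zmod p (fun a => (a : ZMod p) ^ k)]
  simpa using FiniteField.sum_pow_lt_card_sub_one (K := ZMod p) k (by rwa [ZMod.card])

end Bernoulli

section Carry

variable {p : ℕ} [Fact p.Prime]

def carry (g : ℕ) (x : ZMod p) : ℕ := g * x.val / p

lemma carry_add_carry_neg {g : ℕ} (hg : (g : ZMod p) ≠ 0) {x : ZMod p} (hx : x ≠ 0) :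
    carry g x + carry g (-x) + 1 = g := by
  have hgx : ¬ p ∣ g * x.val := by
    rw [← ZMod.natCast_eq_zero_iff]
    simpa using mul_ne_zero hg hx
  rw [carry, carry, ZMod.neg_val, if_neg hx]
  exact mul_div_add_mul_sub_div x.val_le hgx

lemma voronoi_congruence_zmod {g k : ℕ} (hg : (g : ZMod p) ≠ 0) {m : ℤ}
    (hm : ∑ a ∈ range p, (a : ℤ) ^ k = p * m) :
    (1 - (g : ZMod p) ^ k) * m + k * g ^ (k - 1) * ∑ x : ZMod p, x ^ (k - 1) * carry g x = 0 := by
  have hcop : g.Coprime p := ((Nat.Prime.coprime_iff_not_dvd Fact.out).mpr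
    ((ZMod.natCast_eq_zero_iff g p).not.mp hg)).symm
  obtain ⟨c, hc⟩ := voronoi_congruence p g k hcop
  rw [hm, sum_range_eq_sum_zmod p (fun a => (a : ℤ) ^ (k - 1) * (g * a / p : ℕ))] at hc
  simp only [← carry.eq_1] at hc
  have hp0 : (p : ℤ) ≠ 0 := by exact_mod_cast (Fact.out : p.Prime).ne_zero
  have hdiv : (1 - (g : ℤ) ^ k) * m
      + k * g ^ (k - 1) * ∑ x : ZMod p, (x.val : ℤ) ^ (k - 1) * carry g x = p * c :=
    mul_left_cancel₀ hp0 (by linear_combination hc)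
  have := congrArg (Int.cast : ℤ → ZMod p) hdiv
  push_cast at this
  simpa using this

lemma sum_pow_mul_carry {g j : ℕ} (hp : p ≠ 2) (hg : IsPrimitiveRoot (g : ZMod p) (p - 1))
    (hj : Odd j) {c : ZMod p} (hc : c ≠ 0) :
    ∑ x : ZMod p, x ^ j * carry g x
      = ∑ i ∈ range ((p - 1) / 2), ((g : ZMod p) ^ i * c) ^ j
          * (2 * (carry g ((g : ZMod p) ^ i * c) : ZMod p) - (g - 1)) := by
  obtain ⟨n, hn⟩ : ∃ n, p - 1 = 2 * n := by
    obtain ⟨r, hr⟩ := (Fact.out : p.Prime).odd_of_ne_two hp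
    exact ⟨r, by omega⟩
  have hg0 : (g : ZMod p) ≠ 0 := hg.ne_zero (Nat.sub_ne_zero_of_lt (Fact.out : p.Prime).one_lt)
  have hpair (y : ZMod p) (hy : y ≠ 0) : y ^ j * carry g y + (-y) ^ j * carry g (-y)
      = y ^ j * (2 * (carry g y : ZMod p) - (g - 1)) := by
    have := congrArg (Nat.cast : ℕ → ZMod p) (carry_add_carry_neg hg0 hy)
    push_cast at this
    rw [hj.neg_pow]
    linear_combination (-y ^ j) * this
  have hcard : IsPrimitiveRoot (g : ZMod p) (Fintype.card (ZMod p) - 1) := by rwa [ZMod.card]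
  have hg2 : IsPrimitiveRoot (g : ZMod p) (2 * n) := hn ▸ hg
  rw [← sum_erase univ (f := fun x : ZMod p => x ^ j * (carry g x : ZMod p)) (a := 0)
      (by simp [hj.pos.ne']),
    ← hcard.sum_range_pow_mul_eq_sum_erase_zero hc, ZMod.card, hn,
    Nat.mul_div_cancel_left _ two_pos,
    hg2.sum_range_two_mul_pow_mul c (fun y => y ^ j * (carry g y : ZMod p))]
  exact sum_congr rfl fun i _ => hpair _ (mul_ne_zero (pow_ne_zero _ hg0) hc)

def h (p g ginv x : ℕ) : ℚ :=
  (((x % p : ℕ) : ℚ) - g * ((x * ginv % p : ℕ) : ℚ)) / p + ((g : ℚ) - 1) / 2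

lemma cast_h {g ginv : ℕ} (hp : p ≠ 2) (hginv : ((g * ginv : ℕ) : ZMod p) = 1) (x : ℕ) :
    (h p g ginv x : ZMod p)
      = ((g : ZMod p) - 1) / 2 - carry g ((x : ZMod p) * (ginv : ZMod p)) := by
  set b := x * ginv % p
  have hb : ((x : ZMod p) * (ginv : ZMod p)).val = b := by rw [← Nat.cast_mul, ZMod.val_natCast]
  have hmod : g * b % p = x % p := by
    rw [← ZMod.natCast_eq_natCast_iff']
    push_cast [b, ZMod.natCast_mod] at hginv ⊢
    linear_combination (x : ZMod p) * hginv
  have hdiv := Nat.mod_add_div (g * b) p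
  rw [hmod] at hdiv
  rw [carry, hb]
  generalize g * b / p = q at hdiv ⊢
  have hp0 : (p : ℚ) ≠ 0 := by exact_mod_cast (Fact.out : p.Prime).ne_zero
  have hq : h p g ginv x = (((g : ℤ) - 1 - 2 * q : ℤ) : ℚ) / (2 : ℚ) := by
    have := congrArg ((↑) : ℕ → ℚ) hdiv
    push_cast at this ⊢
    rw [h]
    field_simp
    linear_combination 2 * this
  have h2 : (2 : ZMod p) ≠ 0 := Ring.two_ne_zero (by rwa [ZMod.ringChar_zmod_n])
  rw [hq, Rat.cast_div_of_ne_zero (by rw [Rat.den_intCast]; simp) (by simpa using h2),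
    Rat.cast_intCast]
  push_cast
  field_simp

lemma pow_mul_sum_pow_mul_carry {g ginv j : ℕ} (hp : p ≠ 2)
    (hg : IsPrimitiveRoot (g : ZMod p) (p - 1)) (hginv : ((g * ginv : ℕ) : ZMod p) = 1)
    (hj : Odd j) :
    (g : ZMod p) ^ j * ∑ x : ZMod p, x ^ j * carry g x
      = -2 * ∑ i ∈ range ((p - 1) / 2), (g : ZMod p) ^ (j * i) * (h p g ginv (g ^ i) : ZMod p) := by
  have hgginv : (g : ZMod p) * ginv = 1 := by exact_mod_cast hginv
  rw [sum_pow_mul_carry hp hg hj (right_ne_zero_of_mul_eq_one hgginv), mul_sum, mul_sum]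
  refine sum_congr rfl fun i _ => ?_
  rw [cast_h hp hginv, Nat.cast_pow]
  have hpow : (g : ZMod p) ^ j * ((g : ZMod p) ^ i * ginv) ^ j = (g : ZMod p) ^ (j * i) := by
    rw [← mul_pow, mul_left_comm, hgginv, mul_one, ← pow_mul, mul_comm i]
  have h2 : (2 : ZMod p) ≠ 0 := Ring.two_ne_zero (by rwa [ZMod.ringChar_zmod_n])
  linear_combination (2 * (carry g ((g : ZMod p) ^ i * (ginv : ZMod p)) : ZMod p) - (g - 1)) * hpow
    + (g : ZMod p) ^ (j * i) * mul_div_cancel₀ ((g : ZMod p) - 1) h2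

end Carry

end Voronoi

theorem voronoi_multiplicative_general (p g ginv k : ℕ) [Fact p.Prime]
    (hg : IsPrimitiveRoot (g : ZMod p) (p - 1))
    (hginv : ((g * ginv : ℕ) : ZMod p) = 1)
    (hke : Even k) (hk2 : 2 ≤ k) (hklt : k < p - 1)
    (hgk : (g : ZMod p) ^ k ≠ 1) :
    ((bernoulli' k : ℚ) : ZMod p)
      = (2 * k) / (1 - (g : ZMod p) ^ k) *
          ∑ i ∈ Finset.range ((p - 3) / 2 + 1),
            (g : ZMod p) ^ ((k - 1) * i) *
              ((((((g ^ i % p : ℕ) : ℚ) - g * ((g ^ i * ginv % p : ℕ) : ℚ)) / p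
                  + ((g : ℚ) - 1) / 2 : ℚ) : ZMod p)) := by
  obtain ⟨m, hm⟩ := Voronoi.prime_dvd_sum_range_pow (p := p) hklt
  have hB : ((bernoulli' k : ℚ) : ZMod p) = m := by
    rw [← bernoulli_eq_bernoulli'_of_ne_one (by omega)]
    exact Voronoi.cast_bernoulli_eq_of_sum_pow_eq hklt (by exact_mod_cast hm)
  have hV := Voronoi.voronoi_congruence_zmod (hg.ne_zero (by omega)) hm
  rw [mul_assoc, Voronoi.pow_mul_sum_pow_mul_carry (by omega) hg hginv
    (Nat.Even.sub_odd (by omega) hke odd_one)] at hV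
  rw [show (p - 3) / 2 + 1 = (p - 1) / 2 by omega, hB, div_mul_eq_mul_div,
    eq_div_iff (sub_ne_zero.mpr hgk.symm)]
  simp only [← Voronoi.h.eq_1]
  linear_combination hV

/-- Voronoi congruence, multiplicative form.  Let `p ≥ 5` be prime, `g` a primitive
root mod `p` (with integer inverse `ginv` mod `p`), and `k` even with `2 ≤ k < p-1`
and `g^k ≢ 1 (mod p)`.  With
`h(x) = ((x mod p) - g·((x·g⁻¹) mod p))/p + (g-1)/2` (a `p`-integral rational),
we have `B_k ≡ (2k/(1 - g^k)) · ∑_{i=0}^{(p-3)/2} g^{(k-1)i} h(g^i) (mod p)`. -/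
theorem voronoi_multiplicative (p g ginv k : ℕ) [Fact p.Prime] (hp5 : 5 ≤ p)
    (hg : IsPrimitiveRoot (g : ZMod p) (p - 1))
    (hginv : ((g * ginv : ℕ) : ZMod p) = 1)
    (hke : Even k) (hk2 : 2 ≤ k) (hklt : k < p - 1)
    (hgk : (g : ZMod p) ^ k ≠ 1) :
    ((bernoulli' k : ℚ) : ZMod p)
      = (2 * k) / (1 - (g : ZMod p) ^ k) *
          ∑ i ∈ Finset.range ((p - 3) / 2 + 1),
            (g : ZMod p) ^ ((k - 1) * i) *
              ((((((g ^ i % p : ℕ) : ℚ) - g * ((g ^ i * ginv % p : ℕ) : ℚ)) / p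
                  + ((g : ℚ) - 1) / 2 : ℚ) : ZMod p)) :=
  voronoi_multiplicative_general p g ginv k hg hginv hke hk2 hklt hgk
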